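/- arXiv:2501.13761 — 5 statements merged into one kernel-verified Lean document; each statement's English description precedes it below -/
import Mathlib

section
/- Let Γ_1, …, Γ_r be groups in which every nontrivial normal subgroup contains an element of infinite order and every abelian subgroup is cyclic (e.g., hyperbolic orbisurface groups). If H ≤ Γ_1 × ⋯ × Γ_r is a full subdirect product, then H contains a free abelian subgroup of rank r, and r is the maximal rank of a free abelian subgroup of Γ_1 × ⋯ × Γ_r. -/
private lemma zpow_sum_eq {G : Type*} [CommGroup G] {n : ℕ} (g : G) (k : Fin n → ℤ) :
    g ^ (∑ j, k j) = ∏ j, g ^ (k j) := by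
  calc g ^ (∑ j, k j) = zpowersHom G g (Multiplicative.ofAdd (∑ j, k j)) := rfl
    _ = zpowersHom G g (∏ j, Multiplicative.ofAdd (k j)) := by rw [ofAdd_sum]
    _ = ∏ j, zpowersHom G g (Multiplicative.ofAdd (k j)) := map_prod _ _ _
    _ = ∏ j, g ^ (k j) := rfl

private lemma psi_eval {G : Type*} [CommGroup G] {n : ℕ}
    (ψ : Multiplicative (Fin n → ℤ) →* G) (g : G) (c : Fin n → ℤ)
    (hc : ∀ j, ψ (Multiplicative.ofAdd (Pi.single j 1)) = g ^ (c j)) (v : Fin n → ℤ) :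
    ψ (Multiplicative.ofAdd v) = g ^ (∑ j, c j * v j) := by
  have hsingle : ∀ (j : Fin n) (k : ℤ),
      (Pi.single j k : Fin n → ℤ) = k • (Pi.single j (1 : ℤ) : Fin n → ℤ) := by
    intro j k; funext m
    simp only [Pi.single_apply, Pi.smul_apply, smul_eq_mul]
    split <;> simp
  have hv : v = ∑ j, (v j) • (Pi.single j (1 : ℤ) : Fin n → ℤ) := by
    conv_lhs => rw [← Finset.univ_sum_single v]
    exact Finset.sum_congr rfl fun j _ => hsingle j (v j)
  have hof : Multiplicative.ofAdd v
      = ∏ j, (Multiplicative.ofAdd (Pi.single j (1:ℤ) : Fin n → ℤ)) ^ (v j) := by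
    conv_lhs => rw [hv]
    rw [ofAdd_sum]
    exact Finset.prod_congr rfl fun j _ => ofAdd_zsmul _ _
  calc ψ (Multiplicative.ofAdd v)
      = ψ (∏ j, (Multiplicative.ofAdd (Pi.single j (1:ℤ) : Fin n → ℤ)) ^ (v j)) := by
        rw [hof]
    _ = ∏ j, (ψ (Multiplicative.ofAdd (Pi.single j (1:ℤ) : Fin n → ℤ))) ^ (v j) := by
        rw [map_prod]
        exact Finset.prod_congr rfl fun j _ => map_zpow _ _ _
    _ = ∏ j, g ^ (c j * v j) := by
        refine Finset.prod_congr rfl fun j _ => ?_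
        rw [hc j, ← zpow_mul]
    _ = g ^ (∑ j, c j * v j) := (zpow_sum_eq g _).symm

/-- Let `Γ₁, …, Γ_r` be groups in which every nontrivial normal subgroup contains an
element of infinite order and every abelian subgroup is cyclic (e.g. hyperbolic
orbisurface groups).  A full subdirect product `H ≤ Γ₁ × ⋯ × Γ_r` contains a free
abelian subgroup of rank `r`, and `r` is the maximal rank of a free abelian subgroup
of the direct product. -/
theorem full_subdirect_contains_maximal_free_abelian (r : ℕ) (Γ : Fin r → Type)
    [∀ i, Group (Γ i)]
    (hnorm : ∀ i, ∀ N : Subgroup (Γ i), N.Normal → N ≠ ⊥ → ∃ x ∈ N, ¬ IsOfFinOrder x)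
    (habel : ∀ i, ∀ A : Subgroup (Γ i), (∀ a b : ↥A, a * b = b * a) → IsCyclic ↥A)
    (H : Subgroup (∀ i, Γ i))
    (hsub : ∀ i, Function.Surjective fun h : ↥H => (h : ∀ i, Γ i) i)
    (hfull : ∀ i, ∃ x ∈ H, x ≠ 1 ∧ ∀ j, j ≠ i → x j = 1) :
    (∃ φ : Multiplicative (Fin r → ℤ) →* ↥H, Function.Injective φ) ∧
      ∀ φ : Multiplicative (Fin (r + 1) → ℤ) →* (∀ i, Γ i), ¬ Function.Injective φ := by
  constructor
  · -- Part 1: build elements of infinite order with disjoint supports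
    have hx : ∀ i, ∃ g : Γ i, Pi.mulSingle i g ∈ H ∧ ¬ IsOfFinOrder g := by
      intro i
      set N : Subgroup (Γ i) := H.comap (MonoidHom.mulSingle Γ i) with hN
      have hnormal : N.Normal := by
        constructor
        intro g hg a
        obtain ⟨h, hh⟩ := hsub i a
        have hh' : (h : ∀ j, Γ j) i = a := hh
        have hmem : (h : ∀ j, Γ j) * Pi.mulSingle i g * (h : ∀ j, Γ j)⁻¹ ∈ H :=
          H.mul_mem (H.mul_mem h.2 hg) (H.inv_mem h.2)
        have heq : (h : ∀ j, Γ j) * Pi.mulSingle i g * (h : ∀ j, Γ j)⁻¹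
            = Pi.mulSingle i (a * g * a⁻¹) := by
          funext j
          by_cases hj : j = i
          · subst hj
            simp only [Pi.mul_apply, Pi.inv_apply, Pi.mulSingle_eq_same]
            rw [hh']
          · simp [Pi.mulSingle_eq_of_ne hj]
        rw [heq] at hmem
        exact hmem
      have hbot : N ≠ ⊥ := by
        obtain ⟨x, hxH, hx1, hxs⟩ := hfull i
        have hxi : x = Pi.mulSingle i (x i) := by
          funext j
          by_cases hj : j = i
          · subst hj; simp
          · rw [Pi.mulSingle_eq_of_ne hj, hxs j hj]
        intro hb
        have hxN : x i ∈ N := by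
          rw [hN]
          exact Subgroup.mem_comap.2 (by show Pi.mulSingle i (x i) ∈ H; rw [← hxi]; exact hxH)
        rw [hb, Subgroup.mem_bot] at hxN
        exact hx1 (by rw [hxi, hxN]; simp)
      obtain ⟨g, hgN, hgord⟩ := hnorm i N hnormal hbot
      exact ⟨g, hgN, hgord⟩
    choose g hgH hgord using hx
    have hsingleH : ∀ (i : Fin r) (k : ℤ), Pi.mulSingle i (g i ^ k) ∈ H := by
      intro i k
      have : Pi.mulSingle i (g i ^ k) = (Pi.mulSingle i (g i)) ^ k :=
        map_zpow (MonoidHom.mulSingle Γ i) _ _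
      rw [this]
      exact H.zpow_mem (hgH i) _
    have hmem : ∀ v : Fin r → ℤ, (fun i => g i ^ v i) ∈ H := by
      intro v
      have key : ∀ s : Finset (Fin r), (fun i => if i ∈ s then g i ^ v i else 1) ∈ H := by
        intro s
        induction s using Finset.induction_on with
        | empty => convert H.one_mem using 1; funext i; simp
        | @insert a s ha ih =>
          have := H.mul_mem (hsingleH a (v a)) ih
          have heq : (fun i => if i ∈ insert a s then g i ^ v i else 1)
              = Pi.mulSingle a (g a ^ v a) * (fun i => if i ∈ s then g i ^ v i else 1) := by
            funext i
            by_cases hi : i = a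
            · subst hi; simp [ha]
            · simp [hi, Pi.mulSingle_eq_of_ne hi, Finset.mem_insert]
          rw [heq]
          exact this
      have := key Finset.univ
      simpa using this
    refine ⟨{ toFun := fun v => ⟨fun i => g i ^ (v.toAdd i), hmem _⟩
              map_one' := by
                apply Subtype.ext; funext i
                simp
              map_mul' := fun a b => by
                apply Subtype.ext; funext i
                simp [zpow_add] }, ?_⟩
    rw [injective_iff_map_eq_one]
    intro a ha
    have hcoord : ∀ i, g i ^ (a.toAdd i) = 1 :=
      fun i => congrFun (congrArg Subtype.val ha) i
    have h0 : a.toAdd = 0 := by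
      funext i
      have hinj := injective_zpow_iff_not_isOfFinOrder.2 (hgord i)
      exact hinj (by simpa using hcoord i)
    have : a = Multiplicative.ofAdd 0 := by
      rw [← h0]; rfl
    simpa using this
  · -- Part 2: no injective ℤ^{r+1}
    intro φ hinj
    set ψ : ∀ i, Multiplicative (Fin (r+1) → ℤ) →* Γ i :=
      fun i => (Pi.evalMonoidHom Γ i).comp φ with hψ
    have hcyc : ∀ i, IsCyclic ↥(ψ i).range := by
      intro i
      refine habel i _ ?_
      rintro ⟨a, x, rfl⟩ ⟨b, y, rfl⟩
      apply Subtype.ext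
      show ψ i x * ψ i y = ψ i y * ψ i x
      rw [← map_mul, ← map_mul, mul_comm]
    have hgen : ∀ i, ∃ gi : Γ i, ∀ x : Multiplicative (Fin (r+1) → ℤ),
        ψ i x ∈ Subgroup.zpowers gi := by
      intro i
      obtain ⟨gi, hgi⟩ := (hcyc i).exists_generator
      refine ⟨(gi : Γ i), fun x => ?_⟩
      obtain ⟨k, hk⟩ := hgi ⟨ψ i x, ⟨x, rfl⟩⟩
      have : (gi : Γ i) ^ k = ψ i x := by
        simpa using congrArg Subtype.val hk
      exact ⟨k, this⟩
    choose gi hgi using hgen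
    -- restrict ψ i to the commutative subgroup zpowers (gi i)
    set ψ' : ∀ i, Multiplicative (Fin (r+1) → ℤ) →* ↥(Subgroup.zpowers (gi i)) :=
      fun i => MonoidHom.codRestrict (ψ i) _ (hgi i) with hψ'
    set g' : ∀ i, ↥(Subgroup.zpowers (gi i)) :=
      fun i => ⟨gi i, Subgroup.mem_zpowers _⟩ with hg'
    have hA : ∀ i, ∀ j : Fin (r+1), ∃ k : ℤ,
        ψ' i (Multiplicative.ofAdd (Pi.single j 1)) = g' i ^ k := by
      intro i j
      obtain ⟨k, hk⟩ := hgi i (Multiplicative.ofAdd (Pi.single j 1))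
      refine ⟨k, Subtype.ext ?_⟩
      exact hk.symm
    choose A hAeq using hA
    have hkey : ∀ i (v : Fin (r+1) → ℤ),
        ψ' i (Multiplicative.ofAdd v) = g' i ^ (∑ j, A i j * v j) :=
      fun i v => by open scoped IsMulCommutative in exact psi_eval (ψ' i) (g' i) (A i) (hAeq i) v
    set L : (Fin (r+1) → ℤ) →ₗ[ℤ] (Fin r → ℤ) := Matrix.mulVecLin (Matrix.of A) with hL
    have hLinj : Function.Injective L := by
      intro v w hvw
      have hφ : φ (Multiplicative.ofAdd v) = φ (Multiplicative.ofAdd w) := by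
        funext i
        have h1 : φ (Multiplicative.ofAdd v) i = (ψ' i (Multiplicative.ofAdd v) : Γ i) := rfl
        have h2 : φ (Multiplicative.ofAdd w) i = (ψ' i (Multiplicative.ofAdd w) : Γ i) := rfl
        rw [h1, h2, hkey, hkey]
        have hvi := congrFun hvw i
        simp only [hL, Matrix.mulVecLin_apply, Matrix.mulVec, dotProduct,
          Matrix.of_apply] at hvi
        rw [hvi]
      exact Multiplicative.ofAdd.injective (hinj hφ)
    have hle := le_of_fin_injective ℤ L hLinj
    omega
end

section
/- Let G be a profinite group and Λ < G a dense subgroup. If N is a finite normal subgroup of Λ, then N is a normal subgroup of G. -/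
theorem Subgroup.normal_of_isClosed_of_dense {G : Type*} [Group G] [TopologicalSpace G]
    [IsTopologicalGroup G] (H : Subgroup G) (hH : IsClosed (H : Set G)) {s : Set G}
    (hs : Dense s) (hconj : ∀ x ∈ s, ∀ n ∈ H, x * n * x⁻¹ ∈ H) : H.Normal where
  conj_mem n hn g :=
    hs.induction (P := fun x => x * n * x⁻¹ ∈ H) (fun x hx => hconj x hx n hn)
      (hH.preimage (by fun_prop)) g

theorem finite_normal_in_dense_subgroup_is_normal_general (G : Type) [Group G]
    [TopologicalSpace G] [IsTopologicalGroup G] [T2Space G]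
    (Λ : Subgroup G) (hΛ : Dense (Λ : Set G))
    (N : Subgroup G) (hNfin : Finite ↥N)
    (hNnorm : ∀ x ∈ Λ, ∀ n ∈ N, x * n * x⁻¹ ∈ N) :
    N.Normal :=
  N.normal_of_isClosed_of_dense (Set.toFinite (N : Set G)).isClosed hΛ hNnorm

/-- If `Λ` is a dense subgroup of a profinite group `G` and `N ≤ Λ` is a finite
subgroup which is normal in `Λ`, then `N` is normal in `G`. -/
theorem finite_normal_in_dense_subgroup_is_normal (G : Type) [Group G]
    [TopologicalSpace G] [IsTopologicalGroup G] [CompactSpace G] [T2Space G]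
    [TotallyDisconnectedSpace G]
    (Λ : Subgroup G) (hΛ : Dense (Λ : Set G))
    (N : Subgroup G) (hNΛ : N ≤ Λ) (hNfin : Finite ↥N)
    (hNnorm : ∀ x ∈ Λ, ∀ n ∈ N, x * n * x⁻¹ ∈ N) :
    N.Normal :=
  finite_normal_in_dense_subgroup_is_normal_general G Λ hΛ N hNfin hNnorm
end

section
/- Let G be a group such that every finitely presented subgroup of G is closed in the profinite topology on G, and let H be a finitely presented residually finite group. If φ : H → G is a homomorphism inducing an isomorphism of profinite completions, then φ is an isomorphism. -/
/-- A group is finitely presented if it is isomorphic to the quotient of a finitely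
generated free group by the normal closure of finitely many relations. -/
def FinitelyPresentedGroup (K : Type*) [Group K] : Prop :=
  ∃ (n : ℕ) (R : Set (FreeGroup (Fin n))), R.Finite ∧ Nonempty (PresentedGroup R ≃* K)

/-- A subgroup is separable if it is closed in the profinite topology, i.e. every
element outside it is separated from it by a finite index subgroup. -/
def SubgroupSeparable {G : Type*} [Group G] (K : Subgroup G) : Prop :=
  ∀ g : G, g ∉ K → ∃ U : Subgroup G, K ≤ U ∧ U.index ≠ 0 ∧ g ∉ U

/-- A group is residually finite if every nontrivial element survives in some finite
quotient. -/
def ResiduallyFiniteGroup (H : Type*) [Group H] : Prop :=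
  ∀ h : H, h ≠ 1 → ∃ N : Subgroup H, N.Normal ∧ N.index ≠ 0 ∧ h ∉ N

/-- The monoid hom `Perm α →* Perm (Option α)` induced by `Equiv.optionCongr`. -/
def optionCongrHom (α : Type*) : Equiv.Perm α →* Equiv.Perm (Option α) where
  toFun := Equiv.optionCongr
  map_one' := Equiv.optionCongr_one
  map_mul' a b := by ext x; cases x <;> simp

/-- Grothendieck rigidity: if every finitely presented subgroup of `G` is separable,
`H` is finitely presented and residually finite, and `φ : H → G` induces an isomorphism
of profinite completions (equivalently, precomposition with `φ` is a bijection on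
homomorphisms to every finite group), then `φ` is an isomorphism. -/
theorem grothendieck_rigidity_of_separable (G H : Type) [Group G] [Group H]
    (hsep : ∀ K : Subgroup G, FinitelyPresentedGroup ↥K → SubgroupSeparable K)
    (hfp : FinitelyPresentedGroup H) (hrf : ResiduallyFiniteGroup H)
    (φ : H →* G)
    (hφ : ∀ (Q : Type) [Group Q] [Finite Q],
      Function.Bijective fun ψ : G →* Q => ψ.comp φ) :
    Function.Bijective φ := by
  classical
  -- Injectivity
  have hinj : Function.Injective φ := by
    rw [injective_iff_map_eq_one]
    intro a ha
    by_contra hne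
    obtain ⟨N, hNnorm, hNind, haN⟩ := hrf a hne
    haveI : N.FiniteIndex := ⟨hNind⟩
    haveI : Finite (H ⧸ N) := inferInstance
    obtain ⟨ψ, hψ⟩ := (hφ (H ⧸ N)).2 (QuotientGroup.mk' N)
    apply haN
    have : (QuotientGroup.mk' N) a = ψ (φ a) := by rw [← hψ]; rfl
    rw [ha, map_one] at this
    exact (QuotientGroup.eq_one_iff a).mp this
  refine ⟨hinj, ?_⟩
  -- range φ is finitely presented
  have hKfp : FinitelyPresentedGroup ↥φ.range := by
    obtain ⟨n, R, hR, ⟨e⟩⟩ := hfp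
    exact ⟨n, R, hR, ⟨e.trans (MonoidHom.ofInjective hinj)⟩⟩
  -- Surjectivity
  intro g
  by_contra hg
  have hgK : g ∉ φ.range := by
    intro ⟨h, hh⟩; exact hg ⟨h, hh⟩
  obtain ⟨U, hKU, hUind, hgU⟩ := hsep φ.range hKfp g hgK
  haveI : U.FiniteIndex := ⟨hUind⟩
  haveI hQfin : Finite (G ⧸ U) := inferInstance
  haveI := Fintype.ofFinite (G ⧸ U)
  haveI hOfin : Finite (Option (G ⧸ U)) := inferInstance
  haveI hPfin : Finite (Equiv.Perm (Option (G ⧸ U))) := inferInstance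
  set e₀ : G ⧸ U := QuotientGroup.mk 1 with he₀
  let ψ₁ : G →* Equiv.Perm (Option (G ⧸ U)) :=
    (optionCongrHom _).comp (MulAction.toPermHom G (G ⧸ U))
  set σ : Equiv.Perm (Option (G ⧸ U)) := Equiv.swap none (some e₀) with hσ
  let ψ₂ : G →* Equiv.Perm (Option (G ⧸ U)) :=
    (MulAut.conj σ).toMonoidHom.comp ψ₁
  -- ψ₁ and ψ₂ agree after composing with φ
  have hfix : ∀ k : G, k ∈ U → ψ₁ k (some e₀) = some e₀ ∧ ψ₁ k none = none := by
    intro k hk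
    constructor
    · show some (k • e₀) = some e₀
      congr 1
      show QuotientGroup.mk (k * 1) = QuotientGroup.mk 1
      rw [mul_one, QuotientGroup.eq]
      simpa using hk
    · rfl
  have hagree : ψ₁.comp φ = ψ₂.comp φ := by
    ext h : 1
    show ψ₁ (φ h) = ψ₂ (φ h)
    have hk : φ h ∈ U := hKU ⟨h, rfl⟩
    obtain ⟨h1, h2⟩ := hfix (φ h) hk
    show ψ₁ (φ h) = σ * ψ₁ (φ h) * σ⁻¹
    have hkey : σ = ψ₁ (φ h) * σ * (ψ₁ (φ h))⁻¹ := by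
      calc σ = Equiv.swap (ψ₁ (φ h) none) (ψ₁ (φ h) (some e₀)) := by rw [h1, h2, hσ]
        _ = ψ₁ (φ h) * Equiv.swap none (some e₀) * (ψ₁ (φ h))⁻¹ :=
            Equiv.swap_apply_apply _ _ _
        _ = ψ₁ (φ h) * σ * (ψ₁ (φ h))⁻¹ := by rw [← hσ]
    have hcomm : σ * ψ₁ (φ h) = ψ₁ (φ h) * σ := by
      conv_lhs => rw [hkey]
      group
    rw [hcomm]
    group
  have heq : ψ₁ = ψ₂ := (hφ _).1 hagree
  -- evaluate at g to get a contradiction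
  have h1 : ψ₁ g none = none := rfl
  have h2 : ψ₂ g none = some (QuotientGroup.mk g) := by
    show σ (ψ₁ g (σ⁻¹ none)) = some (QuotientGroup.mk g)
    rw [hσ, Equiv.swap_inv, Equiv.swap_apply_left]
    show Equiv.swap none (some e₀) (some (g • e₀)) = some (QuotientGroup.mk g)
    have hge : g • e₀ = QuotientGroup.mk g := by
      show QuotientGroup.mk (g * 1) = QuotientGroup.mk g
      rw [mul_one]
    rw [hge]
    apply Equiv.swap_apply_of_ne_of_ne
    · simp
    · intro hc
      apply hgU
      have hce : QuotientGroup.mk g = e₀ := by injection hc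
      rw [he₀, QuotientGroup.eq] at hce
      simpa using hce
  rw [heq, h2] at h1
  exact Option.some_ne_none _ h1
end

section
/- Let G_0 be a residually finite group that is 2-good, and suppose that for every nontrivial class ψ ∈ H²(G_0, ℤᵏ) there exists a prime power pᵐ such that the image of ψ in H²(G_0, (ℤ/pᵐ)ᵏ) is nontrivial. Then a central extension 1 → ℤᵏ → G → G_0 → 1 splits if and only if the induced exact sequence of profinite completions 1 → ℤ̂ᵏ → Ĝ → Ĝ_0 → 1 splits. -/
/-- A bundled profinite group. -/
structure ProfiniteGrpPkg : Type 1 where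
  carrier : Type
  [grp : Group carrier]
  [top : TopologicalSpace carrier]
  [tgrp : IsTopologicalGroup carrier]
  [cpt : CompactSpace carrier]
  [t2 : T2Space carrier]
  [td : TotallyDisconnectedSpace carrier]

attribute [instance] ProfiniteGrpPkg.grp ProfiniteGrpPkg.top ProfiniteGrpPkg.tgrp
  ProfiniteGrpPkg.cpt ProfiniteGrpPkg.t2 ProfiniteGrpPkg.td

/-- `ι : A → P` exhibits `P` as the profinite completion of `A`. -/
def IsProfiniteCompletionMap (A : Type) [Group A] (P : ProfiniteGrpPkg)
    (ι : A →* P.carrier) : Prop :=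
  DenseRange ι ∧ ∀ (Q : Type) [Group Q] [Finite Q] (f : A →* Q),
    ∃ g : P.carrier →* Q, IsOpen (g.ker : Set P.carrier) ∧ g.comp ι = f

/-- `(j, π)` is a central extension `1 → A → G → Q → 1`. -/
def IsCentralExt {A G Q : Type} [Group A] [Group G] [Group Q]
    (j : A →* G) (π : G →* Q) : Prop :=
  Function.Injective j ∧ (∀ a g, j a * g = g * j a) ∧
    Function.Surjective π ∧ π.ker = j.range

/-- The extension `π : G ↠ Q` splits. -/
def SplitsExt {G Q : Type} [Group G] [Group Q] (π : G →* Q) : Prop :=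
  ∃ s : Q →* G, π.comp s = MonoidHom.id Q

/-- `G₀` is 2-good (characterised, following Reid, by: any extension of `G₀` by a
finitely generated group `N` induces an injection of profinite completions
`N̂ → Ê`). -/
def IsTwoGood (G₀ : Type) [Group G₀] : Prop :=
  ∀ (E : Type) [Group E], ∀ N : Subgroup E, N.Normal → Group.FG ↥N →
    ∀ q : E →* G₀, Function.Surjective q → q.ker = N →
    ∀ (PN PE : ProfiniteGrpPkg) (ιN : ↥N →* PN.carrier) (ιE : E →* PE.carrier),
      IsProfiniteCompletionMap ↥N PN ιN → IsProfiniteCompletionMap E PE ιE →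
      ∀ j : PN.carrier →* PE.carrier, Continuous j → j.comp ιN = ιE.comp N.subtype →
        Function.Injective j

/-- Coordinatewise reduction `ℤᵏ → (ℤ/n)ᵏ`, written multiplicatively. -/
def redHom (k n : ℕ) : Multiplicative (Fin k → ℤ) →* Multiplicative (Fin k → ZMod n) :=
  AddMonoidHom.toMultiplicative ((Int.castAddHom (ZMod n)).compLeft (Fin k))

/-! If `π` has a section, it extends continuously to the completions. Conversely, if `π` does not
split, the hypothesis on `H²` yields a prime power `pᵐ` for which the pushout `E` of the extension
along `ℤᵏ → (ℤ/pᵐ)ᵏ` is still non-split. A section of `Ĝ → Ĝ₀` induces one of `Ê → Ĝ₀`. As the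
kernel of `E → G₀` is finite and central, 2-goodness and residual finiteness make `E → Ê` injective
and `(ℤ/pᵐ)ᵏ → Ê → Ĝ₀` exact, so the section maps `G₀ ⊆ Ĝ₀` into `E ⊆ Ê` and splits `E`. -/

theorem MonoidHom.isOpen_ker_of_continuous {K B : Type*} [Group K] [TopologicalSpace K]
    [Group B] [TopologicalSpace B] [DiscreteTopology B] {f : K →* B} (hf : Continuous f) :
    IsOpen (f.ker : Set K) :=
  (isOpen_discrete ({1} : Set B)).preimage hf

theorem MonoidHom.continuous_of_isOpen_ker {K B : Type*} [Group K] [TopologicalSpace K]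
    [IsTopologicalGroup K] [Group B] [TopologicalSpace B] [DiscreteTopology B] (f : K →* B)
    (hf : IsOpen (f.ker : Set K)) : Continuous f :=
  continuous_of_continuousAt_one f <| by
    rw [ContinuousAt, map_one, nhds_discrete B, Filter.tendsto_pure]
    exact hf.mem_nhds (one_mem f.ker)

section Profinite

variable (K : Type*) [Group K] [TopologicalSpace K]

def quotientDiag : K →* ∀ U : OpenNormalSubgroup K, K ⧸ U.toSubgroup :=
  MonoidHom.pi fun U => QuotientGroup.mk' U.toSubgroup

theorem continuous_quotientDiag : Continuous (quotientDiag K) :=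
  continuous_pi fun _ => continuous_quot_mk

variable {K} [IsTopologicalGroup K] [CompactSpace K] [TotallyDisconnectedSpace K]

theorem exists_openNormalSubgroup_forall_mul_notMem [T1Space K] {M : Set K} (hM : M.Finite)
    {z : K} (hz : z ∉ M) : ∃ W : OpenNormalSubgroup K, ∀ w ∈ W, z * w ∉ M := by
  obtain ⟨W, hW⟩ := ProfiniteGrp.exist_openNormalSubgroup_sub_open_nhds_of_one
    (hM.isClosed.isOpen_compl.preimage (continuous_const_mul z)) (by simpa using hz)
  exact ⟨W, fun w hw => hW hw⟩

theorem quotientDiag_injective [T1Space K] : Function.Injective (quotientDiag K) := by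
  refine (injective_iff_map_eq_one _).2 fun z hz => ?_
  by_contra hz1
  obtain ⟨W, hW⟩ := exists_openNormalSubgroup_forall_mul_notMem (Set.finite_singleton 1)
    (Set.mem_singleton_iff.not.2 hz1)
  have hzW : z ∈ W := (QuotientGroup.eq_one_iff z).1 (congrFun hz W)
  exact hW z⁻¹ (inv_mem hzW) (mul_inv_cancel z)

end Profinite

theorem MonoidHom.exists_comp_eq_of_range_le {K L P : Type*} [Group K] [Group L] [Group P]
    {e : K →* L} (he : Function.Injective e) {Φ : P →* L} (hΦe : Φ.range ≤ e.range) :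
    ∃ F : P →* K, e.comp F = Φ :=
  ⟨(MonoidHom.ofInjective he).symm.toMonoidHom.comp (Φ.codRestrict e.range fun x => hΦe ⟨x, rfl⟩),
    MonoidHom.ext fun _ => (MonoidHom.ofInjective_apply he).symm.trans
      (congrArg Subtype.val ((MonoidHom.ofInjective he).apply_symm_apply _))⟩

theorem exists_continuous_comp_eq_of_range_le {K L P : Type*} [Group K] [Group L] [Group P]
    [TopologicalSpace K] [TopologicalSpace L] [TopologicalSpace P] [CompactSpace K] [T2Space L]
    {e : K →* L} (he : Continuous e) (he' : Function.Injective e) {Φ : P →* L}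
    (hΦ : Continuous Φ) (hΦe : Φ.range ≤ e.range) :
    ∃ F : P →* K, Continuous F ∧ e.comp F = Φ := by
  obtain ⟨F, heF⟩ := MonoidHom.exists_comp_eq_of_range_le he' hΦe
  refine ⟨F, ?_, heF⟩
  rw [(he.isClosedEmbedding he').isEmbedding.continuous_iff, ← MonoidHom.coe_comp, heF]
  exact hΦ

namespace IsProfiniteCompletionMap

variable {A : Type} [Group A] {P : ProfiniteGrpPkg} {ι : A →* P.carrier}

theorem hom_ext (h : IsProfiniteCompletionMap A P ι) {B : Type*} [Group B] [TopologicalSpace B]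
    [T2Space B] {f g : P.carrier →* B} (hf : Continuous f) (hg : Continuous g)
    (hfg : f.comp ι = g.comp ι) : f = g :=
  DFunLike.coe_injective <| h.1.equalizer hf hg <| congrArg DFunLike.coe hfg

theorem exists_continuous_extend (h : IsProfiniteCompletionMap A P ι) {K : Type} [Group K]
    [TopologicalSpace K] [IsTopologicalGroup K] [CompactSpace K] [T2Space K]
    [TotallyDisconnectedSpace K] (f : A →* K) :
    ∃ F : P.carrier →* K, Continuous F ∧ F.comp ι = f := by
  have (U : OpenNormalSubgroup K) : Finite (K ⧸ U.toSubgroup) :=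
    Subgroup.quotient_finite_of_isOpen _ U.isOpen
  choose g hg_open hg using fun U : OpenNormalSubgroup K =>
    h.2 _ ((QuotientGroup.mk' U.toSubgroup).comp f)
  let Φ := MonoidHom.pi g
  have hΦ : Continuous Φ := continuous_pi fun U =>
    have := QuotientGroup.discreteTopology U.isOpen
    (g U).continuous_of_isOpen_ker (hg_open U)
  have hΦι : Φ.comp ι = (quotientDiag K).comp f := by
    ext a U
    exact DFunLike.congr_fun (hg U) a
  -- `K` is closed in `∏ K/U`, and `Φ` maps the dense image of `A` into it
  have hrange : Φ.range ≤ (quotientDiag K).range := by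
    rintro _ ⟨x, rfl⟩
    refine h.1.induction_on (p := fun x => Φ x ∈ Set.range (quotientDiag K)) x
      ((isCompact_range (continuous_quotientDiag K)).isClosed.preimage hΦ) fun a => ⟨f a, ?_⟩
    exact (DFunLike.congr_fun hΦι a).symm
  obtain ⟨F, hF, hFΦ⟩ := exists_continuous_comp_eq_of_range_le (continuous_quotientDiag K)
    quotientDiag_injective hΦ hrange
  refine ⟨F, hF, (MonoidHom.cancel_left quotientDiag_injective).1 ?_⟩
  rw [← MonoidHom.comp_assoc, hFΦ, hΦι]

theorem injective (h : IsProfiniteCompletionMap A P ι) (hA : ResiduallyFiniteGroup A) :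
    Function.Injective ι := by
  refine (injective_iff_map_eq_one ι).2 fun x hx => ?_
  by_contra hx1
  obtain ⟨N, hN, hNidx, hxN⟩ := hA x hx1
  have : N.FiniteIndex := ⟨hNidx⟩
  obtain ⟨g, -, hg⟩ := h.2 (A ⧸ N) (QuotientGroup.mk' N)
  refine hxN ((QuotientGroup.eq_one_iff x).1 ?_)
  rw [← QuotientGroup.mk'_apply, ← hg, MonoidHom.comp_apply, hx, map_one]

theorem map_mul_comm (h : IsProfiniteCompletionMap A P ι) {x : A} (hx : ∀ a, x * a = a * x)
    (z : P.carrier) : ι x * z = z * ι x :=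
  congrFun (h.1.equalizer (g := (ι x * ·)) (h := (· * ι x)) (by fun_prop) (by fun_prop)
    (funext fun a => by simp only [Function.comp_apply, ← map_mul, hx])) z

end IsProfiniteCompletionMap

open ProfiniteGrp.ProfiniteCompletion in
theorem exists_isProfiniteCompletionMap (A : Type) [Group A] :
    ∃ (P : ProfiniteGrpPkg) (ι : A →* P.carrier), IsProfiniteCompletionMap A P ι := by
  refine ⟨{ carrier := completion (GrpCat.of A) }, (eta (GrpCat.of A)).hom,
    denseRange (GrpCat.of A), fun Q _ _ f => ?_⟩
  let Qhat := ProfiniteGrp.ofFiniteGrp (FiniteGrp.of Q)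
  have : DiscreteTopology Qhat := ⟨rfl⟩
  let F := lift (P := Qhat) (GrpCat.ofHom f)
  exact ⟨F.hom.toMonoidHom, MonoidHom.isOpen_ker_of_continuous (B := Qhat) F.hom.continuous,
    congrArg GrpCat.Hom.hom (lift_eta (P := Qhat) (GrpCat.ofHom f))⟩

def ProfiniteGrpPkg.ofFinite (N : Type) [Group N] [Finite N] : ProfiniteGrpPkg :=
  letI : TopologicalSpace N := ⊥
  haveI : DiscreteTopology N := ⟨rfl⟩
  { carrier := N }

instance (N : Type) [Group N] [Finite N] : DiscreteTopology (ProfiniteGrpPkg.ofFinite N).carrier :=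
  ⟨rfl⟩

theorem isProfiniteCompletionMap_ofFinite (N : Type) [Group N] [Finite N] :
    IsProfiniteCompletionMap N (ProfiniteGrpPkg.ofFinite N) (MonoidHom.id N) :=
  ⟨Function.Surjective.denseRange fun x => ⟨x, rfl⟩, fun _ _ _ f => ⟨f, isOpen_discrete _, rfl⟩⟩

theorem Subgroup.normal_of_forall_mul_comm {G : Type*} [Group G] {H : Subgroup G}
    (hH : ∀ x ∈ H, ∀ g : G, x * g = g * x) : H.Normal :=
  ⟨fun x hx g => by rwa [← hH x hx g, mul_inv_cancel_right]⟩

theorem redHom_surjective (k n : ℕ) : Function.Surjective (redHom k n) :=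
  ZMod.intCast_surjective.comp_left

theorem IsCentralExt.exists_pushout {A B G G₀ : Type} [Group A] [Group B] [Group G] [Group G₀]
    {i : A →* G} {π : G →* G₀} (hext : IsCentralExt i π) {r : A →* B}
    (hr : Function.Surjective r) :
    ∃ (E : Type) (_ : Group E) (j : B →* E) (q : E →* G₀) (θ : G →* E),
      IsCentralExt j q ∧ q.comp θ = π ∧ θ.comp i = j.comp r := by
  obtain ⟨hi, hcent, hπ, hker⟩ := hext
  let S := r.ker.map i
  have : S.Normal := Subgroup.normal_of_forall_mul_comm <| by
    rintro _ ⟨a, -, rfl⟩ g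
    exact hcent a g
  let θ := QuotientGroup.mk' S
  let q := QuotientGroup.lift S π (hker ▸ Subgroup.map_le_range i r.ker)
  let j := r.liftOfSurjective hr
    ⟨θ.comp i, fun a ha => (QuotientGroup.eq_one_iff _).2 ⟨a, ha, rfl⟩⟩
  have hjr : ∀ a, j (r a) = θ (i a) := r.liftOfRightInverse_comp_apply _ _ _
  refine ⟨G ⧸ S, inferInstance, j, q, θ, ⟨?_, ?_, ?_, ?_⟩, rfl, MonoidHom.ext fun a => (hjr a).symm⟩
  · refine (injective_iff_map_eq_one j).2 fun b hb => ?_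
    obtain ⟨a, rfl⟩ := hr b
    obtain ⟨a', ha', haa'⟩ := (QuotientGroup.eq_one_iff _).1 ((hjr a).symm.trans hb)
    rwa [← hi haa']
  · intro b e
    obtain ⟨a, rfl⟩ := hr b
    obtain ⟨g, rfl⟩ := QuotientGroup.mk'_surjective S e
    rw [hjr, ← map_mul, ← map_mul, hcent]
  · exact Function.Surjective.of_comp (g := θ) hπ
  · ext e
    obtain ⟨g, rfl⟩ := QuotientGroup.mk'_surjective S e
    change π g = 1 ↔ _
    rw [← MonoidHom.mem_ker, hker]
    constructor
    · rintro ⟨a, rfl⟩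
      exact ⟨r a, hjr a⟩
    · rintro ⟨b, hb⟩
      obtain ⟨a, rfl⟩ := hr b
      rw [hjr] at hb
      obtain ⟨a', -, ha'⟩ := QuotientGroup.eq.1 hb
      exact ⟨a * a', by rw [map_mul, ha', mul_inv_cancel_left]⟩

theorem SplitsExt.of_injective_of_ker_le_range {E G₀ PE P₀ : Type} [Group E] [Group G₀]
    [Group PE] [Group P₀] {q : E →* G₀} {ιE : E →* PE} {ι₀ : G₀ →* P₀} {πE : PE →* P₀}
    (hsplit : SplitsExt πE) (hq : Function.Surjective q) (hιE : Function.Injective ιE)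
    (hι₀ : Function.Injective ι₀) (hcomm : πE.comp ιE = ι₀.comp q) (hker : πE.ker ≤ ιE.range) :
    SplitsExt q := by
  obtain ⟨σ, hσ⟩ := hsplit
  have hσ' : ∀ y, πE (σ y) = y := DFunLike.congr_fun hσ
  have hcomm' : ∀ e, πE (ιE e) = ι₀ (q e) := DFunLike.congr_fun hcomm
  have hrange : (σ.comp ι₀).range ≤ ιE.range := by
    rintro _ ⟨x, rfl⟩
    obtain ⟨e, rfl⟩ := hq x
    have : σ (ι₀ (q e)) * (ιE e)⁻¹ ∈ ιE.range := hker (by simp [hσ', hcomm'])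
    simpa using mul_mem this (ιE.mem_range.2 ⟨e, rfl⟩)
  obtain ⟨s, hs⟩ := MonoidHom.exists_comp_eq_of_range_le hιE hrange
  refine ⟨s, MonoidHom.ext fun x => hι₀ ?_⟩
  rw [MonoidHom.comp_apply, ← hcomm', ← MonoidHom.comp_apply ιE, hs, MonoidHom.comp_apply, hσ',
    MonoidHom.id_apply]

theorem IsTwoGood.injective_comp_ker_subtype {G₀ E : Type} [Group G₀] [Group E]
    (hgood : IsTwoGood G₀) {q : E →* G₀} (hq : Function.Surjective q) [Finite q.ker]
    {PE : ProfiniteGrpPkg} {ιE : E →* PE.carrier} (hE : IsProfiniteCompletionMap E PE ιE) :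
    Function.Injective (ιE.comp q.ker.subtype) :=
  hgood E q.ker q.normal_ker Group.fg_of_finite q hq rfl _ PE _ ιE
    (isProfiniteCompletionMap_ofFinite _) hE _ continuous_of_discreteTopology rfl

theorem injective_of_injective_comp_ker_subtype {E G₀ PE P₀ : Type} [Group E] [Group G₀]
    [Group PE] [Group P₀] {q : E →* G₀} {ιE : E →* PE} {ι₀ : G₀ →* P₀} {πE : PE →* P₀}
    (hcomm : πE.comp ιE = ι₀.comp q) (hι₀ : Function.Injective ι₀)
    (hker : Function.Injective (ιE.comp q.ker.subtype)) : Function.Injective ιE := by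
  refine (injective_iff_map_eq_one ιE).2 fun e he => ?_
  have hqe : q e = 1 := hι₀ <| by
    rw [← MonoidHom.comp_apply, ← hcomm, MonoidHom.comp_apply, he, map_one, map_one]
  exact congrArg Subtype.val (hker (a₁ := ⟨e, hqe⟩) (a₂ := 1) (by simpa using he))

theorem IsProfiniteCompletionMap.ker_le_map_ker {E G₀ : Type} [Group E] [Group G₀]
    {q : E →* G₀} (hq : Function.Surjective q) [Finite q.ker]
    (hcent : ∀ x ∈ q.ker, ∀ e, x * e = e * x) {PE P₀ : ProfiniteGrpPkg}
    {ιE : E →* PE.carrier} {ι₀ : G₀ →* P₀.carrier} (hE : IsProfiniteCompletionMap E PE ιE)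
    (h₀ : IsProfiniteCompletionMap G₀ P₀ ι₀) {πE : PE.carrier →* P₀.carrier}
    (hπE : Continuous πE) (hcomm : πE.comp ιE = ι₀.comp q) : πE.ker ≤ q.ker.map ιE := by
  intro z hz
  by_contra hzM
  set M := q.ker.map ιE
  have : M.Normal := Subgroup.normal_of_forall_mul_comm <| by
    rintro _ ⟨x, hx, rfl⟩ z
    exact hE.map_mul_comm (hcent x hx) z
  have hM : (M : Set PE.carrier).Finite := by
    rw [Subgroup.coe_map]
    exact (Set.toFinite _).image ιE
  obtain ⟨W, hW⟩ := exists_openNormalSubgroup_forall_mul_notMem hM hzM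
  let D := M ⊔ W.toSubgroup
  have hzD : z ∉ D := by
    rw [← SetLike.mem_coe, Subgroup.mul_normal]
    rintro ⟨m, hm, w, hw, rfl⟩
    exact hW w⁻¹ (inv_mem hw) (by simpa using hm)
  have hDopen : IsOpen (D : Set PE.carrier) := Subgroup.isOpen_mono le_sup_right W.isOpen
  have := Subgroup.quotient_finite_of_isOpen D hDopen
  have := QuotientGroup.discreteTopology hDopen
  -- `E → Ê/D` kills `ker q`, so it factors through `G₀`, hence through `Ĝ₀`
  let c : G₀ →* PE.carrier ⧸ D := q.liftOfSurjective hq ⟨(QuotientGroup.mk' D).comp ιE,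
    fun x hx => (QuotientGroup.eq_one_iff _).2 (le_sup_left (a := M) ⟨x, hx, rfl⟩)⟩
  obtain ⟨C, hCopen, hC⟩ := h₀.2 _ c
  have hCπ : C.comp πE = QuotientGroup.mk' D := by
    refine hE.hom_ext ((C.continuous_of_isOpen_ker hCopen).comp hπE) continuous_quot_mk ?_
    rw [MonoidHom.comp_assoc, hcomm, ← MonoidHom.comp_assoc, hC]
    exact q.liftOfRightInverse_comp _ _ _
  refine hzD ((QuotientGroup.eq_one_iff z).1 ?_)
  rw [← QuotientGroup.mk'_apply, ← hCπ, MonoidHom.comp_apply, hz, map_one]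

theorem IsCentralExt.splitsExt_of_splitsExt_completion {B E G₀ : Type} [Group B] [Finite B]
    [Group E] [Group G₀] {j : B →* E} {q : E →* G₀} (hjq : IsCentralExt j q)
    (hrf : ResiduallyFiniteGroup G₀) (hgood : IsTwoGood G₀) {PE P₀ : ProfiniteGrpPkg}
    {ιE : E →* PE.carrier} {ι₀ : G₀ →* P₀.carrier} (hE : IsProfiniteCompletionMap E PE ιE)
    (h₀ : IsProfiniteCompletionMap G₀ P₀ ι₀) {πE : PE.carrier →* P₀.carrier}
    (hπE : Continuous πE) (hcomm : πE.comp ιE = ι₀.comp q) (hsplit : SplitsExt πE) :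
    SplitsExt q := by
  obtain ⟨-, hcent, hq, hker⟩ := hjq
  have : Finite q.ker := hker ▸ Finite.of_surjective _ j.rangeRestrict_surjective
  have hcent' : ∀ x ∈ q.ker, ∀ e, x * e = e * x := by
    rw [hker]
    rintro _ ⟨b, rfl⟩
    exact hcent b
  have hι₀ := h₀.injective hrf
  refine hsplit.of_injective_of_ker_le_range hq ?_ hι₀ hcomm ?_
  · exact injective_of_injective_comp_ker_subtype hcomm hι₀ (hgood.injective_comp_ker_subtype hq hE)
  · exact (hE.ker_le_map_ker hq hcent' h₀ hπE hcomm).trans (Subgroup.map_le_range _ _)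

theorem SplitsExt.exists_continuous_section {G G₀ : Type} [Group G] [Group G₀] {π : G →* G₀}
    (hs : SplitsExt π) {P P₀ : ProfiniteGrpPkg} {ι : G →* P.carrier} {ι₀ : G₀ →* P₀.carrier}
    (h₀ : IsProfiniteCompletionMap G₀ P₀ ι₀) {πh : P.carrier →* P₀.carrier}
    (hπh : Continuous πh) (hcomm : πh.comp ι = ι₀.comp π) :
    ∃ s : P₀.carrier →* P.carrier, Continuous s ∧ πh.comp s = MonoidHom.id P₀.carrier := by
  obtain ⟨s, hs⟩ := hs
  obtain ⟨S, hS, hSι⟩ := h₀.exists_continuous_extend (ι.comp s)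
  refine ⟨S, hS, h₀.hom_ext (hπh.comp hS) continuous_id ?_⟩
  rw [MonoidHom.comp_assoc, hSι, ← MonoidHom.comp_assoc, hcomm, MonoidHom.comp_assoc, hs,
    MonoidHom.comp_id, MonoidHom.id_comp]

/-- A class in `H²(G₀, ℤᵏ)` is represented by a central extension, nontrivial meaning non-split;
its image in `H²(G₀, (ℤ/pᵐ)ᵏ)` is represented by the pushout along `redHom k (p ^ m)`. -/
theorem central_extension_splits_iff_profinite_splits (k : ℕ) (G₀ G : Type)
    [Group G₀] [Group G]
    (hrf : ResiduallyFiniteGroup G₀) (hgood : IsTwoGood G₀)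
    (i : Multiplicative (Fin k → ℤ) →* G) (π : G →* G₀) (hext : IsCentralExt i π)
    (hH2 : ∀ (E : Type) [Group E] (j : Multiplicative (Fin k → ℤ) →* E) (q : E →* G₀),
      IsCentralExt j q → ¬ SplitsExt q →
      ∃ p m : ℕ, p.Prime ∧ 0 < m ∧
        ∀ (E' : Type) [Group E'] (j' : Multiplicative (Fin k → ZMod (p ^ m)) →* E')
          (q' : E' →* G₀) (θ : E →* E'),
          IsCentralExt j' q' → q'.comp θ = q →
          θ.comp j = j'.comp (redHom k (p ^ m)) → ¬ SplitsExt q') :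
    SplitsExt π ↔
      ∀ (P P₀ : ProfiniteGrpPkg) (ι : G →* P.carrier) (ι₀ : G₀ →* P₀.carrier),
        IsProfiniteCompletionMap G P ι → IsProfiniteCompletionMap G₀ P₀ ι₀ →
        ∀ πh : P.carrier →* P₀.carrier, Continuous πh → πh.comp ι = ι₀.comp π →
          ∃ s : P₀.carrier →* P.carrier, Continuous s ∧
            πh.comp s = MonoidHom.id P₀.carrier := by
  refine ⟨fun hs P P₀ ι ι₀ _ h₀ πh hπh hcomm => hs.exists_continuous_section h₀ hπh hcomm,
    fun hprof => by_contra fun hns => ?_⟩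
  obtain ⟨p, m, hp, -, hred⟩ := hH2 G i π hext hns
  obtain ⟨E, _, j, q, θ, hjq, hqθ, hθi⟩ := hext.exists_pushout (redHom_surjective k (p ^ m))
  have : NeZero (p ^ m) := ⟨pow_ne_zero m hp.ne_zero⟩
  obtain ⟨P, ι, hP⟩ := exists_isProfiniteCompletionMap G
  obtain ⟨P₀, ι₀, h₀⟩ := exists_isProfiniteCompletionMap G₀
  obtain ⟨PE, ιE, hE⟩ := exists_isProfiniteCompletionMap E
  obtain ⟨πh, hπh, hπhι⟩ := hP.exists_continuous_extend (ι₀.comp π)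
  obtain ⟨θh, hθh, hθhι⟩ := hP.exists_continuous_extend (ιE.comp θ)
  obtain ⟨πE, hπE, hπEι⟩ := hE.exists_continuous_extend (ι₀.comp q)
  obtain ⟨s, -, hs⟩ := hprof P P₀ ι ι₀ hP h₀ πh hπh hπhι
  have hπEθh : πE.comp θh = πh := by
    refine hP.hom_ext (hπE.comp hθh) hπh ?_
    rw [MonoidHom.comp_assoc, hθhι, ← MonoidHom.comp_assoc, hπEι, MonoidHom.comp_assoc, hqθ, hπhι]
  refine hred E j q θ hjq hqθ hθi (hjq.splitsExt_of_splitsExt_completion hrf hgood hE h₀ hπE hπEι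
    ⟨θh.comp s, ?_⟩)
  rw [← MonoidHom.comp_assoc, hπEθh, hs]
end

section
/- Let Γ be a group, and let φ_i : G → Γ_i (i = 1,2) be surjective homomorphisms from a group G to infinite groups Γ_1, Γ_2 in which every finitely generated normal subgroup is trivial or of finite index. Suppose ker(φ_1) and ker(φ_2) are finitely generated and there is a group Λ that is infinite together with surjections u_i : Γ_i → Λ with u_1 ∘ φ_1 = u_2 ∘ φ_2. Then ker(φ_1) = ker(φ_2). -/
lemma aux_ker_le (G Γ Λ : Type) [Group G] [Group Γ] [Group Λ] [Infinite Λ]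
    (h : ∀ N : Subgroup Γ, N.Normal → Group.FG ↥N → N = ⊥ ∨ N.index ≠ 0)
    (φ : G →* Γ) (hs : Function.Surjective φ)
    (K : Subgroup G) (hKn : K.Normal) (hKfg : Group.FG ↥K)
    (u : Γ →* Λ) (hu : Function.Surjective u)
    (hK : ∀ g ∈ K, u (φ g) = 1) : K ≤ φ.ker := by
  set N := K.map φ with hN
  have hNn : N.Normal := hKn.map φ hs
  have hNfg : Group.FG ↥N := Group.fg_of_surjective (φ.subgroupMap_surjective K)
  have hNle : N ≤ u.ker := by
    rintro x ⟨g, hg, rfl⟩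
    exact hK g hg
  rcases h N hNn hNfg with hbot | hind
  · intro g hg
    have : φ g ∈ N := ⟨g, hg, rfl⟩
    rw [hbot] at this
    exact this
  · exfalso
    have hdvd : u.ker.index ∣ N.index := Subgroup.index_dvd_of_le hNle
    have hker0 : u.ker.index = 0 := by
      rw [u.ker.index_eq_card, Nat.card_congr (QuotientGroup.quotientKerEquivOfSurjective u hu).toEquiv]
      exact Nat.card_eq_zero_of_infinite
    rw [hker0] at hdvd
    exact hind (zero_dvd_iff.mp hdvd)

/-- Let `φᵢ : G ↠ Γᵢ` (i = 1,2) be surjections with finitely generated kernels onto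
groups in which every finitely generated normal subgroup is trivial or of finite index.
If there are surjections `uᵢ : Γᵢ ↠ Λ` onto an infinite group `Λ` with
`u₁ ∘ φ₁ = u₂ ∘ φ₂`, then `ker φ₁ = ker φ₂`. -/
theorem kernels_coincide (G Γ₁ Γ₂ Λ : Type) [Group G] [Group Γ₁] [Group Γ₂] [Group Λ]
    [Infinite Λ]
    (h₁ : ∀ N : Subgroup Γ₁, N.Normal → Group.FG ↥N → N = ⊥ ∨ N.index ≠ 0)
    (h₂ : ∀ N : Subgroup Γ₂, N.Normal → Group.FG ↥N → N = ⊥ ∨ N.index ≠ 0)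
    (φ₁ : G →* Γ₁) (φ₂ : G →* Γ₂)
    (hs₁ : Function.Surjective φ₁) (hs₂ : Function.Surjective φ₂)
    (hk₁ : Group.FG ↥φ₁.ker) (hk₂ : Group.FG ↥φ₂.ker)
    (u₁ : Γ₁ →* Λ) (u₂ : Γ₂ →* Λ)
    (hu₁ : Function.Surjective u₁) (hu₂ : Function.Surjective u₂)
    (hcomm : u₁.comp φ₁ = u₂.comp φ₂) :
    φ₁.ker = φ₂.ker := by
  have key : ∀ g : G, u₁ (φ₁ g) = u₂ (φ₂ g) := fun g =>
    DFunLike.congr_fun hcomm g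
  apply le_antisymm
  · exact aux_ker_le G Γ₂ Λ h₂ φ₂ hs₂ φ₁.ker φ₁.normal_ker hk₁ u₂ hu₂
      (fun g hg => by rw [← key g, hg, map_one])
  · exact aux_ker_le G Γ₁ Λ h₁ φ₁ hs₁ φ₂.ker φ₂.normal_ker hk₂ u₁ hu₁
      (fun g hg => by rw [key g, hg, map_one])
end
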